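/- Let α = (9−√5)/38. For every real number μ with 0 ≤ μ ≤ 1, the real number λ(μ) = (1/76)·((4√5−17)μ − 4√5 + 36 − √((160√5+1201)μ² − 16(√5−85)μ − 144√5 + 688)) is an eigenvalue of the 9×9 real symmetric matrix N(μ). -/
import Mathlib


noncomputable def α : ℝ := (9 - Real.sqrt 5) / 38

noncomputable def N (μ : ℝ) : Matrix (Fin 9) (Fin 9) ℝ :=
  !![1, μ/2+α*(1-μ), μ/2+2*α*(1-μ), μ/2+α*(1-μ), μ/2+2*α*(1-μ), μ/2, μ/2+α*(1-μ), μ/2+α*(1-μ), 0;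
     μ/2+α*(1-μ), μ/2+α*(1-μ), 0, μ/2, μ/2+α*(1-μ), μ/2, μ/2+α*(1-μ), μ/2, 0;
     μ/2+2*α*(1-μ), 0, μ/2+2*α*(1-μ), μ/2+α*(1-μ), 0, μ/2, 0, μ/2+α*(1-μ), 0;
     μ/2+α*(1-μ), μ/2, μ/2+α*(1-μ), μ/2+α*(1-μ), 0, μ/2, μ/2, μ/2+α*(1-μ), 0;
     μ/2+2*α*(1-μ), μ/2+α*(1-μ), 0, 0, μ/2+2*α*(1-μ), μ/2, μ/2+α*(1-μ), 0, 0;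
     μ/2, μ/2, μ/2, μ/2, μ/2, μ/2, μ/2, μ/2, 0;
     μ/2+α*(1-μ), μ/2+α*(1-μ), 0, μ/2, μ/2+α*(1-μ), μ/2, μ/2+α*(1-μ), μ/2, 0;
     μ/2+α*(1-μ), μ/2, μ/2+α*(1-μ), μ/2+α*(1-μ), 0, μ/2, μ/2, μ/2+α*(1-μ), 0;
     0, 0, 0, 0, 0, 0, 0, 0, 0]

set_option maxHeartbeats 1000000 in
set_option maxRecDepth 4000 in
theorem stmt9 (μ : ℝ) (hμ0 : 0 ≤ μ) (hμ1 : μ ≤ 1) :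
    ∃ v : Fin 9 → ℝ, v ≠ 0 ∧
      (N μ).mulVec v =
        ((1/76) * ((4 * Real.sqrt 5 - 17) * μ - 4 * Real.sqrt 5 + 36 -
          Real.sqrt ((160 * Real.sqrt 5 + 1201) * μ^2 -
            16 * (Real.sqrt 5 - 85) * μ - 144 * Real.sqrt 5 + 688))) • v := by
  have hr2 : Real.sqrt 5 ^ 2 = 5 := Real.sq_sqrt (by norm_num)
  have hrn : 0 ≤ Real.sqrt 5 := Real.sqrt_nonneg 5
  have hapos : 0 < μ/2 + α*(1-μ) := by
    unfold α; nlinarith [hr2, hrn, hμ0, hμ1]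
  set s : ℝ := Real.sqrt (μ^2/4 + 8*(μ/2 + α*(1-μ))^2) with hs
  have hsn : 0 ≤ s := Real.sqrt_nonneg _
  have hs2 : s ^ 2 = μ^2/4 + 8*(μ/2 + α*(1-μ))^2 := Real.sq_sqrt (by positivity)
  clear_value s
  have hD : (160 * Real.sqrt 5 + 1201) * μ^2 - 16 * (Real.sqrt 5 - 85) * μ
        - 144 * Real.sqrt 5 + 688
      = 1444 * (μ^2/4 + 8*(μ/2 + α*(1-μ))^2) := by
    unfold α; linear_combination (-8*(1-μ)^2) * hr2
  have hsqrtD : Real.sqrt ((160 * Real.sqrt 5 + 1201) * μ^2 - 16 * (Real.sqrt 5 - 85) * μ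
        - 144 * Real.sqrt 5 + 688) = 38 * s := by
    rw [hD, show (1444:ℝ) = 38^2 by norm_num, Real.sqrt_mul (by positivity), hs,
      Real.sqrt_sq (by norm_num)]
  have hL : (1/76) * ((4 * Real.sqrt 5 - 17) * μ - 4 * Real.sqrt 5 + 36 -
      Real.sqrt ((160 * Real.sqrt 5 + 1201) * μ^2 - 16 * (Real.sqrt 5 - 85) * μ
        - 144 * Real.sqrt 5 + 688))
      = 2*(μ/2 + α*(1-μ)) - 3*μ/4 - s/2 := by
    rw [hsqrtD]; unfold α; ring
  refine ⟨![0, -(2*(μ/2 + α*(1-μ))), -(s-μ/2), 2*(μ/2 + α*(1-μ)), s-μ/2, 0,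
      -(2*(μ/2 + α*(1-μ))), 2*(μ/2 + α*(1-μ)), 0], ?_, ?_⟩
  · intro h
    have h1 := congrFun h 1
    simp at h1
    nlinarith [hapos, h1]
  · rw [hL]
    funext i
    fin_cases i <;>
      norm_num [N, Matrix.mulVec, dotProduct, Fin.sum_univ_succ,
        Matrix.cons_val_zero', Matrix.cons_val_succ', Matrix.cons_val_succ] <;>
      first
        | ring1
        | linear_combination (1/2) * hs2
        | linear_combination (-1/2) * hs2
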